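/- arXiv:2210.03293 — 3 statements merged into one kernel-verified Lean document; each statement's English description precedes it below -/
import Mathlib

section
/- Let V be a finite set of modules. All modules in V are pairwise non-overlapping if and only if Σ_{v_i ∈ V} ∬_{R_i} Σ_{v_j ∈ V} ρ_j(u,v) du dv = Σ_{v_i ∈ V} Area(R_i). -/
open MeasureTheory

/-! The integrand over `R i` is the number of rectangles covering the point, so the `i`-th
integral equals `∑ j, area (R i ∩ R j)`. The diagonal terms `j = i` sum to `∑ i, area (R i)`,
and the remaining terms are nonnegative and finite, so they vanish exactly when the rectangles
pairwise overlap in null sets. -/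

section CoveringNumber

variable {α ι : Type*} [MeasurableSpace α] {μ : Measure α} [Fintype ι] {s : ι → Set α}

theorem setIntegral_sum_indicator_one (hs : ∀ j, MeasurableSet (s j)) {t : Set α}
    (ht : μ t ≠ ⊤) :
    ∫ p in t, ∑ j, (s j).indicator (fun _ => (1 : ℝ)) p ∂μ = ∑ j, μ.real (t ∩ s j) := by
  have hfin : IsFiniteMeasure (μ.restrict t) := isFiniteMeasure_restrict.2 ht
  rw [integral_finsetSum _ fun j _ => (integrable_const 1).indicator (hs j)]
  refine Finset.sum_congr rfl fun j _ => ?_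
  rw [integral_indicator_const _ (hs j), measureReal_restrict_apply (hs j), Set.inter_comm,
    smul_eq_mul, mul_one]

theorem sum_measureReal_inter_eq_sum_add_offDiag [DecidableEq ι] :
    ∑ i, ∑ j, μ.real (s i ∩ s j) =
      ∑ i, μ.real (s i) + ∑ i, ∑ j ∈ Finset.univ.erase i, μ.real (s i ∩ s j) := by
  rw [← Finset.sum_add_distrib]
  refine Finset.sum_congr rfl fun i _ => ?_
  rw [← Finset.add_sum_erase _ _ (Finset.mem_univ i), Set.inter_self]

theorem pairwise_measure_inter_eq_zero_iff_sum_offDiag_eq_zero [DecidableEq ι]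
    (hs : ∀ i, μ (s i) ≠ ⊤) :
    Pairwise (fun i j => μ (s i ∩ s j) = 0) ↔
      ∑ i, ∑ j ∈ Finset.univ.erase i, μ.real (s i ∩ s j) = 0 := by
  have hfin : ∀ i j, μ (s i ∩ s j) ≠ ⊤ := fun i j =>
    ne_top_of_le_ne_top (hs i) (measure_mono Set.inter_subset_left)
  simp only [Finset.sum_eq_zero_iff_of_nonneg (fun _ _ => Finset.sum_nonneg
      fun _ _ => measureReal_nonneg), Finset.sum_eq_zero_iff_of_nonneg
      (fun _ _ => measureReal_nonneg), Finset.mem_univ, Finset.mem_erase, ne_eq, and_true,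
    forall_const, measureReal_eq_zero_iff (hfin _ _)]
  exact ⟨fun h i j hji => h (Ne.symm hji), fun h i j hij => h i j (Ne.symm hij)⟩

theorem pairwise_measure_inter_eq_zero_iff_sum_setIntegral_eq_sum_measureReal [DecidableEq ι]
    (hs : ∀ i, MeasurableSet (s i)) (hfin : ∀ i, μ (s i) ≠ ⊤) :
    Pairwise (fun i j => μ (s i ∩ s j) = 0) ↔
      ∑ i, ∫ p in s i, ∑ j, (s j).indicator (fun _ => (1 : ℝ)) p ∂μ = ∑ i, μ.real (s i) := by
  simp only [setIntegral_sum_indicator_one hs (hfin _), sum_measureReal_inter_eq_sum_add_offDiag,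
    add_eq_left, pairwise_measure_inter_eq_zero_iff_sum_offDiag_eq_zero hfin]

end CoveringNumber

theorem volume_real_centered_rectangle (x y : ℝ) {w h : ℝ} (hw : 0 ≤ w) (hh : 0 ≤ h) :
    volume.real (Set.Icc (x - w / 2) (x + w / 2) ×ˢ Set.Icc (y - h / 2) (y + h / 2)) = w * h := by
  rw [Measure.volume_eq_prod, measureReal_prod_prod, Real.volume_real_Icc_of_le (by linarith),
    Real.volume_real_Icc_of_le (by linarith)]
  ring

/-- the modules of a finite set `V` are pairwise non-overlapping iff
`Σ_{v_i ∈ V} ∬_{R_i} Σ_{v_j ∈ V} ρ_j = Σ_{v_i ∈ V} Area(R_i)`. -/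
theorem pairwise_nonoverlap_iff_sum_integral_eq_sum_area
    {ι : Type*} [Fintype ι] (x y w h : ι → ℝ)
    (hw : ∀ i, 0 < w i) (hh : ∀ i, 0 < h i)
    (R : ι → Set (ℝ × ℝ))
    (hR : ∀ i, R i =
      Set.Icc (x i - w i / 2) (x i + w i / 2) ×ˢ Set.Icc (y i - h i / 2) (y i + h i / 2)) :
    (∀ i j : ι, i ≠ j → volume (R i ∩ R j) = 0) ↔
      (∑ i, ∫ p in R i, ∑ j, (R j).indicator (fun _ => (1 : ℝ)) p) = ∑ i, w i * h i := by
  have hmeas : ∀ i, MeasurableSet (R i) := fun i =>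
    hR i ▸ measurableSet_Icc.prod measurableSet_Icc
  have hfin : ∀ i, volume (R i) ≠ ⊤ := fun i =>
    (hR i ▸ isCompact_Icc.prod isCompact_Icc : IsCompact (R i)).measure_ne_top
  have harea : ∀ i, volume.real (R i) = w i * h i := fun i =>
    hR i ▸ volume_real_centered_rectangle (x i) (y i) (hw i).le (hh i).le
  classical
  simp only [← harea]
  exact pairwise_measure_inter_eq_zero_iff_sum_setIntegral_eq_sum_measureReal hmeas hfin
end

section
/- Let W, H > 0, K ∈ ℕ, real coefficients a_{up} (0 ≤ u, p ≤ K) with a_{00} = 0, and ψ(z,v) = Σ_{u=0}^{K} Σ_{p=0}^{K} a_{up} cos(uπz/W) cos(pπv/H). Fix y_i ∈ ℝ, w_i > 0, A_i > 0 and h_i = A_i/w_i, and define g(x) = ∬_{[x − w_i/2, x + w_i/2] × [y_i − h_i/2, y_i + h_i/2]} ψ(z,v) dz dv. Then g is differentiable in x with derivative g′(x_i) = Σ_{u=1}^{K} Σ_{p=1}^{K} a_{up} (H/(pπ)) [cos(uπ(x_i + w_i/2)/W) − cos(uπ(x_i − w_i/2)/W)] [sin(pπ(y_i + h_i/2)/H)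 − sin(pπ(y_i − h_i/2)/H)] + Σ_{u=1}^{K} a_{u0} h_i [cos(uπ(x_i + w_i/2)/W) − cos(uπ(x_i − w_i/2)/W)]. -/
/-!
The inner integral `Φ z = ∫ v, ψ z v` over the module's vertical extent is continuous in `z`,
so by the fundamental theorem of calculus the sliding-window integral
`x ↦ ∫_{x-w/2}^{x+w/2} Φ` has derivative `Φ (x + w/2) - Φ (x - w/2)`. Integrating `ψ` termwise
in `v` gives `Φ z = ∑ a_{up} cos (uπz/W) c_p` with `c_0 = h` and `c_p = H/(pπ) (sin - sin)` for
`p ≥ 1`; the `u = 0` terms do not depend on `z` and cancel in the difference.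
-/

open MeasureTheory Real

theorem Continuous.hasDerivAt_integral_sub_add {E : Type*} [NormedAddCommGroup E]
    [NormedSpace ℝ E] [CompleteSpace E] {f : ℝ → E} (hf : Continuous f) (r s x : ℝ) :
    HasDerivAt (fun x => ∫ t in (x - r)..(x + s), f t) (f (x + s) - f (x - r)) x := by
  have hprim (c : ℝ) : HasDerivAt (fun x => ∫ t in (0 : ℝ)..(x + c), f t) (f (x + c)) x :=
    (hf.integral_hasStrictDerivAt 0 (x + c)).hasDerivAt.comp_add_const x c
  have hsub := hprim s |>.sub (by simpa [sub_eq_add_neg] using hprim (-r))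
  refine hsub.congr_of_eventuallyEq (Filter.Eventually.of_forall fun y => ?_)
  exact (intervalIntegral.integral_interval_sub_left (hf.intervalIntegrable _ _)
    (hf.intervalIntegrable _ _)).symm

theorem integral_cos_mul_div {k c : ℝ} (hk : k ≠ 0) (hc : c ≠ 0) (a b : ℝ) :
    ∫ v in a..b, cos (k * v / c) = c / k * (sin (k * b / c) - sin (k * a / c)) := by
  simp_rw [mul_div_right_comm k]
  rw [intervalIntegral.integral_comp_mul_left _ (div_ne_zero hk hc), integral_cos]
  simp only [smul_eq_mul, inv_div]

theorem intervalIntegral.integral_sum_sum_const_mul {ι κ : Type*} (s : Finset ι) (t : Finset κ)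
    (c : ι → κ → ℝ) {g : κ → ℝ → ℝ} {a b : ℝ}
    (hg : ∀ p ∈ t, IntervalIntegrable (g p) volume a b) :
    ∫ v in a..b, ∑ u ∈ s, ∑ p ∈ t, c u p * g p v =
      ∑ u ∈ s, ∑ p ∈ t, c u p * ∫ v in a..b, g p v := by
  have hterm (u : ι) (p : κ) (hp : p ∈ t) :
      IntervalIntegrable (fun v => c u p * g p v) volume a b :=
    (hg p hp).const_mul (c u p)
  rw [intervalIntegral.integral_finsetSum (f := fun u v => ∑ p ∈ t, c u p * g p v)
    fun u _ => by simpa only [Finset.sum_fn] using IntervalIntegrable.sum t (hterm u)]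
  refine Finset.sum_congr rfl fun u _ => ?_
  rw [intervalIntegral.integral_finsetSum (f := fun p v => c u p * g p v) (hterm u)]
  simp only [intervalIntegral.integral_const_mul]

theorem Finset.sum_range_add_one_eq_add_sum_Icc {M : Type*} [AddCommMonoid M] (f : ℕ → M)
    (K : ℕ) : ∑ i ∈ Finset.range (K + 1), f i = f 0 + ∑ i ∈ Finset.Icc 1 K, f i := by
  rw [Finset.sum_range_eq_add_Ico f K.succ_pos]
  rfl

theorem hasDerivAt_potential_energy_x_general
    (W H : ℝ) (hH : 0 < H) (K : ℕ) (a : ℕ → ℕ → ℝ)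
    (yi wi Ai : ℝ) (xi : ℝ) :
    HasDerivAt
      (fun x : ℝ =>
        ∫ z in (x - wi / 2)..(x + wi / 2), ∫ v in (yi - (Ai / wi) / 2)..(yi + (Ai / wi) / 2),
          ∑ u ∈ Finset.range (K + 1), ∑ p ∈ Finset.range (K + 1),
            a u p * Real.cos ((u : ℝ) * π * z / W) * Real.cos ((p : ℝ) * π * v / H))
      ((∑ u ∈ Finset.Icc 1 K, ∑ p ∈ Finset.Icc 1 K,
          a u p * (H / ((p : ℝ) * π)) *
            (Real.cos ((u : ℝ) * π * (xi + wi / 2) / W) -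
              Real.cos ((u : ℝ) * π * (xi - wi / 2) / W)) *
            (Real.sin ((p : ℝ) * π * (yi + (Ai / wi) / 2) / H) -
              Real.sin ((p : ℝ) * π * (yi - (Ai / wi) / 2) / H)))
        + (∑ u ∈ Finset.Icc 1 K,
            a u 0 * (Ai / wi) *
              (Real.cos ((u : ℝ) * π * (xi + wi / 2) / W) -
                Real.cos ((u : ℝ) * π * (xi - wi / 2) / W))))
      xi := by
  refine (Continuous.hasDerivAt_integral_sub_add (by fun_prop) (wi / 2) (wi / 2) xi).congr_deriv ?_
  have hint (p : ℕ) (c d : ℝ) :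
      IntervalIntegrable (fun v => cos ((p : ℝ) * π * v / H)) volume c d :=
    Continuous.intervalIntegrable (by fun_prop) c d
  rw [intervalIntegral.integral_sum_sum_const_mul _ _ _ fun p _ => hint p _ _,
    intervalIntegral.integral_sum_sum_const_mul _ _ _ fun p _ => hint p _ _,
    ← Finset.sum_sub_distrib]
  simp_rw [← Finset.sum_sub_distrib, ← sub_mul, ← mul_sub]
  rw [Finset.sum_range_add_one_eq_add_sum_Icc]
  simp only [CharP.cast_eq_zero, zero_mul, zero_div, cos_zero, sub_self, mul_zero,
    Finset.sum_const_zero, zero_add, ← Finset.sum_add_distrib]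
  refine Finset.sum_congr rfl fun u _ => ?_
  rw [Finset.sum_range_add_one_eq_add_sum_Icc, add_comm]
  congr 1
  · refine Finset.sum_congr rfl fun p hp => ?_
    have hp0 : (p : ℝ) ≠ 0 :=
      Nat.cast_ne_zero.mpr (Nat.one_le_iff_ne_zero.mp (Finset.mem_Icc.mp hp).1)
    rw [integral_cos_mul_div (mul_ne_zero hp0 pi_ne_zero) hH.ne']
    ring
  · simp only [CharP.cast_eq_zero, zero_mul, zero_div, cos_zero, intervalIntegral.integral_const,
      smul_eq_mul, mul_one]
    ring

/-- the potential energy is differentiable in the abscissa `x_i` of the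
module's center, with the stated closed-form derivative. -/
theorem hasDerivAt_potential_energy_x
    (W H : ℝ) (hW : 0 < W) (hH : 0 < H) (K : ℕ) (a : ℕ → ℕ → ℝ) (ha00 : a 0 0 = 0)
    (yi wi Ai : ℝ) (hwi : 0 < wi) (hAi : 0 < Ai) (xi : ℝ) :
    HasDerivAt
      (fun x : ℝ =>
        ∫ z in (x - wi / 2)..(x + wi / 2), ∫ v in (yi - (Ai / wi) / 2)..(yi + (Ai / wi) / 2),
          ∑ u ∈ Finset.range (K + 1), ∑ p ∈ Finset.range (K + 1),
            a u p * Real.cos ((u : ℝ) * π * z / W) * Real.cos ((p : ℝ) * π * v / H))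
      ((∑ u ∈ Finset.Icc 1 K, ∑ p ∈ Finset.Icc 1 K,
          a u p * (H / ((p : ℝ) * π)) *
            (Real.cos ((u : ℝ) * π * (xi + wi / 2) / W) -
              Real.cos ((u : ℝ) * π * (xi - wi / 2) / W)) *
            (Real.sin ((p : ℝ) * π * (yi + (Ai / wi) / 2) / H) -
              Real.sin ((p : ℝ) * π * (yi - (Ai / wi) / 2) / H)))
        + (∑ u ∈ Finset.Icc 1 K,
            a u 0 * (Ai / wi) *
              (Real.cos ((u : ℝ) * π * (xi + wi / 2) / W) -
                Real.cos ((u : ℝ) * π * (xi - wi / 2) / W))))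
      xi :=
  hasDerivAt_potential_energy_x_general W H hH K a yi wi Ai xi
end

section
/- Let W, H > 0, K ∈ ℕ, real coefficients a_{up} (0 ≤ u, p ≤ K) with a_{00} = 0, and ψ(z,v) = Σ_{u=0}^{K} Σ_{p=0}^{K} a_{up} cos(uπz/W) cos(pπv/H). Fix x_i, y_i ∈ ℝ and A_i > 0, and for w > 0 define g(w) = ∬_{[x_i − w/2, x_i + w/2] × [y_i − A_i/(2w), y_i + A_i/(2w)]} ψ(z,v) dz dv. Then g is differentiable at every w_i > 0, and with h_i = A_i/w_i its derivative equals: Σ_{u=1}^{K} Σ_{p=1}^{K} a_{up} (WH/(2upπ)) { (u/W)[cos(uπ(x_i + w_i/2)/W) + cos(uπ(x_i − w_i/2)/W)] [sin(pπ(y_i + h_i/2)/H) − sin(pπ(y_i − h_i/2)/H)] − (pA_i/(H w_i²)) [sin(uπ(x_i + w_i/2)/W) − sin(uπ(x_i − w_i/2)/W)] [cos(pπ(y_i + h_i/2)/H) + cos(pπ(y_i − h_i/2)/H)] } + Σ_{u=1}^{K} a_{u0} (W/(uπ)) { (uπh_i/(2W)) [cos(uπ(x_i + w_i/2)/W) +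 cos(uπ(x_i − w_i/2)/W)] − (A_i/w_i²) [sin(uπ(x_i + w_i/2)/W) − sin(uπ(x_i − w_i/2)/W)] } + Σ_{p=1}^{K} a_{0p} (H/(pπ)) { [sin(pπ(y_i + h_i/2)/H) − sin(pπ(y_i − h_i/2)/H)] − (pπA_i/(2H w_i)) [cos(pπ(y_i + h_i/2)/H) + cos(pπ(y_i − h_i/2)/H)] }. -/
open MeasureTheory Real

lemma int_cos_ne (k A B : ℝ) (hk : k ≠ 0) :
    ∫ z in A..B, Real.cos (k * z) = (Real.sin (k * B) - Real.sin (k * A)) / k := by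
  have h : ∀ x ∈ Set.uIcc A B, HasDerivAt (fun y => Real.sin (k * y) / k) (Real.cos (k * x)) x := by
    intro x _
    have h1 : HasDerivAt (fun y : ℝ => k * y) k x := by simpa using (hasDerivAt_id x).const_mul k
    have h3 := h1.sin.div_const k
    simpa [mul_div_cancel_right₀ _ hk] using h3
  rw [intervalIntegral.integral_eq_sub_of_hasDerivAt h
    ((Real.continuous_cos.comp (by fun_prop)).intervalIntegrable _ _)]
  ring

lemma int_cos_form (c L A B : ℝ) (hc : c ≠ 0) (hL : L ≠ 0) :
    ∫ z in A..B, Real.cos (c * π * z / L)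
      = (L / (c * π)) * (Real.sin (c * π * B / L) - Real.sin (c * π * A / L)) := by
  have hk : c * π / L ≠ 0 := div_ne_zero (mul_ne_zero hc Real.pi_ne_zero) hL
  simp_rw [show ∀ z : ℝ, c * π * z / L = (c * π / L) * z from fun z => by ring]
  rw [int_cos_ne _ _ _ hk]
  rw [show c * π / L * B = c * π * B / L by ring, show c * π / L * A = c * π * A / L by ring]
  field_simp

set_option maxHeartbeats 1600000 in
/-- the potential energy of a soft module, as a function of its width `w`
(with height `A_i / w` preserving the area), is differentiable at every `w_i > 0`
with the stated closed-form derivative (where `h_i = A_i / w_i`). -/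
theorem hasDerivAt_potential_energy_w
    (W H : ℝ) (hW : 0 < W) (hH : 0 < H) (K : ℕ) (a : ℕ → ℕ → ℝ) (ha00 : a 0 0 = 0)
    (xi yi Ai : ℝ) (hAi : 0 < Ai) (wi : ℝ) (hwi : 0 < wi) :
    HasDerivAt
      (fun w : ℝ =>
        ∫ z in (xi - w / 2)..(xi + w / 2), ∫ v in (yi - Ai / (2 * w))..(yi + Ai / (2 * w)),
          ∑ u ∈ Finset.range (K + 1), ∑ p ∈ Finset.range (K + 1),
            a u p * Real.cos ((u : ℝ) * π * z / W) * Real.cos ((p : ℝ) * π * v / H))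
      ((∑ u ∈ Finset.Icc 1 K, ∑ p ∈ Finset.Icc 1 K,
          a u p * (W * H / (2 * (u : ℝ) * (p : ℝ) * π)) *
            (((u : ℝ) / W) *
                (Real.cos ((u : ℝ) * π * (xi + wi / 2) / W) +
                  Real.cos ((u : ℝ) * π * (xi - wi / 2) / W)) *
                (Real.sin ((p : ℝ) * π * (yi + (Ai / wi) / 2) / H) -
                  Real.sin ((p : ℝ) * π * (yi - (Ai / wi) / 2) / H))
              - ((p : ℝ) * Ai / (H * wi ^ 2)) *
                (Real.sin ((u : ℝ) * π * (xi + wi / 2) / W) -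
                  Real.sin ((u : ℝ) * π * (xi - wi / 2) / W)) *
                (Real.cos ((p : ℝ) * π * (yi + (Ai / wi) / 2) / H) +
                  Real.cos ((p : ℝ) * π * (yi - (Ai / wi) / 2) / H))))
        + (∑ u ∈ Finset.Icc 1 K,
            a u 0 * (W / ((u : ℝ) * π)) *
              (((u : ℝ) * π * (Ai / wi) / (2 * W)) *
                  (Real.cos ((u : ℝ) * π * (xi + wi / 2) / W) +
                    Real.cos ((u : ℝ) * π * (xi - wi / 2) / W))
                - (Ai / wi ^ 2) *
                  (Real.sin ((u : ℝ) * π * (xi + wi / 2) / W) -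
                    Real.sin ((u : ℝ) * π * (xi - wi / 2) / W))))
        + (∑ p ∈ Finset.Icc 1 K,
            a 0 p * (H / ((p : ℝ) * π)) *
              ((Real.sin ((p : ℝ) * π * (yi + (Ai / wi) / 2) / H) -
                  Real.sin ((p : ℝ) * π * (yi - (Ai / wi) / 2) / H))
                - ((p : ℝ) * π * Ai / (2 * H * wi)) *
                  (Real.cos ((p : ℝ) * π * (yi + (Ai / wi) / 2) / H) +
                    Real.cos ((p : ℝ) * π * (yi - (Ai / wi) / 2) / H)))))
      wi := by
  have hW0 : W ≠ 0 := hW.ne'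
  have hH0 : H ≠ 0 := hH.ne'
  have hwi0 : wi ≠ 0 := hwi.ne'
  have hπ : π ≠ 0 := Real.pi_ne_zero
  refine HasDerivAt.congr_of_eventuallyEq
    (f := fun w : ℝ =>
      (∑ u ∈ Finset.Icc 1 K, ∑ p ∈ Finset.Icc 1 K,
        a u p * (W / ((u : ℝ) * π) *
          (Real.sin ((u : ℝ) * π * (xi + w / 2) / W) -
            Real.sin ((u : ℝ) * π * (xi - w / 2) / W))) *
          (H / ((p : ℝ) * π) *
            (Real.sin ((p : ℝ) * π * (yi + Ai / (2 * w)) / H) -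
              Real.sin ((p : ℝ) * π * (yi - Ai / (2 * w)) / H))))
      + (∑ u ∈ Finset.Icc 1 K,
          a u 0 * (W / ((u : ℝ) * π) *
            (Real.sin ((u : ℝ) * π * (xi + w / 2) / W) -
              Real.sin ((u : ℝ) * π * (xi - w / 2) / W))) * (Ai / w))
      + (∑ p ∈ Finset.Icc 1 K,
          a 0 p * w *
            (H / ((p : ℝ) * π) *
              (Real.sin ((p : ℝ) * π * (yi + Ai / (2 * w)) / H) -
                Real.sin ((p : ℝ) * π * (yi - Ai / (2 * w)) / H)))))
    ?_ ?_
  · -- derivative of the closed form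
    have hAiw : HasDerivAt (fun w : ℝ => Ai / (2 * w)) (Ai / 2 * -(wi ^ 2)⁻¹) wi := by
      rw [show (fun w : ℝ => Ai / (2 * w)) = fun w => Ai / 2 * w⁻¹ from funext fun w => by ring]
      exact (hasDerivAt_inv hwi0).const_mul (Ai / 2)
    have hAw : HasDerivAt (fun w : ℝ => Ai / w) (Ai * -(wi ^ 2)⁻¹) wi := by
      rw [show (fun w : ℝ => Ai / w) = fun w => Ai * w⁻¹ from funext fun w => by
        rw [div_eq_mul_inv]]
      exact (hasDerivAt_inv hwi0).const_mul Ai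
    refine HasDerivAt.add (HasDerivAt.add ?_ ?_) ?_
    · refine HasDerivAt.fun_sum fun u hu => ?_
      refine HasDerivAt.fun_sum fun p hp => ?_
      have hu0 : ((u : ℝ)) ≠ 0 := Nat.cast_ne_zero.mpr (by
        have := (Finset.mem_Icc.mp hu).1; omega)
      have hp0 : ((p : ℝ)) ≠ 0 := Nat.cast_ne_zero.mpr (by
        have := (Finset.mem_Icc.mp hp).1; omega)
      have hb1 : HasDerivAt (fun w : ℝ => (u : ℝ) * π * (xi + w / 2) / W)
          ((u : ℝ) * π * (1 / 2) / W) wi := by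
        exact ((((hasDerivAt_id' (𝕜 := ℝ) (x := wi)).div_const 2).const_add xi).const_mul
          ((u : ℝ) * π)).div_const W
      have hb2 : HasDerivAt (fun w : ℝ => (u : ℝ) * π * (xi - w / 2) / W)
          ((u : ℝ) * π * -(1 / 2) / W) wi := by
        exact ((((hasDerivAt_id' (𝕜 := ℝ) (x := wi)).div_const 2).const_sub xi).const_mul
          ((u : ℝ) * π)).div_const W
      have hc1 : HasDerivAt (fun w : ℝ => (p : ℝ) * π * (yi + Ai / (2 * w)) / H)
          ((p : ℝ) * π * (Ai / 2 * -(wi ^ 2)⁻¹) / H) wi :=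
        ((hAiw.const_add yi).const_mul ((p : ℝ) * π)).div_const H
      have hc2 : HasDerivAt (fun w : ℝ => (p : ℝ) * π * (yi - Ai / (2 * w)) / H)
          ((p : ℝ) * π * -(Ai / 2 * -(wi ^ 2)⁻¹) / H) wi :=
        ((hAiw.const_sub yi).const_mul ((p : ℝ) * π)).div_const H
      have hx := (hb1.sin.sub hb2.sin).const_mul (W / ((u : ℝ) * π))
      have hy := (hc1.sin.sub hc2.sin).const_mul (H / ((p : ℝ) * π))
      have htot := (hx.const_mul (a u p)).mul hy
      convert htot using 1
      · rfl
      · rfl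
      simp only [Pi.sub_apply]
      rw [show Ai / (2 * wi) = Ai / wi / 2 by ring]
      field_simp
      ring
    · refine HasDerivAt.fun_sum fun u hu => ?_
      have hu0 : ((u : ℝ)) ≠ 0 := Nat.cast_ne_zero.mpr (by
        have := (Finset.mem_Icc.mp hu).1; omega)
      have hb1 : HasDerivAt (fun w : ℝ => (u : ℝ) * π * (xi + w / 2) / W)
          ((u : ℝ) * π * (1 / 2) / W) wi :=
        ((((hasDerivAt_id' (𝕜 := ℝ) (x := wi)).div_const 2).const_add xi).const_mul
          ((u : ℝ) * π)).div_const W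
      have hb2 : HasDerivAt (fun w : ℝ => (u : ℝ) * π * (xi - w / 2) / W)
          ((u : ℝ) * π * -(1 / 2) / W) wi :=
        ((((hasDerivAt_id' (𝕜 := ℝ) (x := wi)).div_const 2).const_sub xi).const_mul
          ((u : ℝ) * π)).div_const W
      have hx := (hb1.sin.sub hb2.sin).const_mul (W / ((u : ℝ) * π))
      have htot := (hx.const_mul (a u 0)).mul hAw
      convert htot using 1
      · rfl
      · rfl
      simp only [Pi.sub_apply]
      field_simp
      ring
    · refine HasDerivAt.fun_sum fun p hp => ?_
      have hp0 : ((p : ℝ)) ≠ 0 := Nat.cast_ne_zero.mpr (by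
        have := (Finset.mem_Icc.mp hp).1; omega)
      have hc1 : HasDerivAt (fun w : ℝ => (p : ℝ) * π * (yi + Ai / (2 * w)) / H)
          ((p : ℝ) * π * (Ai / 2 * -(wi ^ 2)⁻¹) / H) wi := by
        have hAiw : HasDerivAt (fun w : ℝ => Ai / (2 * w)) (Ai / 2 * -(wi ^ 2)⁻¹) wi := by
          rw [show (fun w : ℝ => Ai / (2 * w)) = fun w => Ai / 2 * w⁻¹ from
            funext fun w => by ring]
          exact (hasDerivAt_inv hwi0).const_mul (Ai / 2)
        exact ((hAiw.const_add yi).const_mul ((p : ℝ) * π)).div_const H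
      have hc2 : HasDerivAt (fun w : ℝ => (p : ℝ) * π * (yi - Ai / (2 * w)) / H)
          ((p : ℝ) * π * -(Ai / 2 * -(wi ^ 2)⁻¹) / H) wi := by
        have hAiw : HasDerivAt (fun w : ℝ => Ai / (2 * w)) (Ai / 2 * -(wi ^ 2)⁻¹) wi := by
          rw [show (fun w : ℝ => Ai / (2 * w)) = fun w => Ai / 2 * w⁻¹ from
            funext fun w => by ring]
          exact (hasDerivAt_inv hwi0).const_mul (Ai / 2)
        exact ((hAiw.const_sub yi).const_mul ((p : ℝ) * π)).div_const H
      have hy := (hc1.sin.sub hc2.sin).const_mul (H / ((p : ℝ) * π))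
      have hw : HasDerivAt (fun w : ℝ => a 0 p * w) (a 0 p * 1) wi :=
        (hasDerivAt_id' (𝕜 := ℝ) (x := wi)).const_mul (a 0 p)
      have htot := hw.mul hy
      convert htot using 1
      · rfl
      · rfl
      simp only [Pi.sub_apply]
      rw [show Ai / (2 * wi) = Ai / wi / 2 by ring]
      field_simp
      ring
  · -- eventual equality
    filter_upwards [Ioi_mem_nhds hwi] with w hw
    have hw0 : (w : ℝ) ≠ 0 := (ne_of_gt hw)
    have hinner : ∀ z : ℝ,
        (∫ v in (yi - Ai / (2 * w))..(yi + Ai / (2 * w)),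
          ∑ u ∈ Finset.range (K + 1), ∑ p ∈ Finset.range (K + 1),
            a u p * Real.cos ((u : ℝ) * π * z / W) * Real.cos ((p : ℝ) * π * v / H))
        = ∑ u ∈ Finset.range (K + 1), ∑ p ∈ Finset.range (K + 1),
            a u p * Real.cos ((u : ℝ) * π * z / W) *
              (∫ v in (yi - Ai / (2 * w))..(yi + Ai / (2 * w)),
                Real.cos ((p : ℝ) * π * v / H)) := by
      intro z
      rw [intervalIntegral.integral_finset_sum (fun u _ =>
        (continuous_finset_sum _ fun p _ => by fun_prop).intervalIntegrable _ _)]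
      refine Finset.sum_congr rfl fun u _ => ?_
      rw [intervalIntegral.integral_finset_sum (fun p _ =>
        (Continuous.intervalIntegrable (by fun_prop) _ _))]
      exact Finset.sum_congr rfl fun p _ => intervalIntegral.integral_const_mul _ _
    simp only [hinner]
    rw [intervalIntegral.integral_finset_sum (fun u _ =>
      (continuous_finset_sum _ fun p _ => by fun_prop).intervalIntegrable _ _)]
    rw [Finset.sum_congr rfl (fun u _ => intervalIntegral.integral_finset_sum (fun p _ =>
      (Continuous.intervalIntegrable (by fun_prop) _ _)))]
    simp only [intervalIntegral.integral_mul_const, intervalIntegral.integral_const_mul]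
    have hsplit : Finset.range (K + 1) = insert 0 (Finset.Icc 1 K) := by
      ext n; simp [Nat.lt_succ_iff]; omega
    have h0 : (0 : ℕ) ∉ Finset.Icc 1 K := by simp
    simp only [hsplit, Finset.sum_insert h0, Nat.cast_zero, zero_mul, zero_div,
      Real.cos_zero, intervalIntegral.integral_const, smul_eq_mul, mul_one, ha00, zero_add]
    have e1 : ∑ p ∈ Finset.Icc 1 K,
        a 0 p * (xi + w / 2 - (xi - w / 2)) *
          (∫ v in (yi - Ai / (2 * w))..(yi + Ai / (2 * w)), Real.cos ((p : ℝ) * π * v / H))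
        = ∑ p ∈ Finset.Icc 1 K,
          a 0 p * w *
            (H / ((p : ℝ) * π) *
              (Real.sin ((p : ℝ) * π * (yi + Ai / (2 * w)) / H) -
                Real.sin ((p : ℝ) * π * (yi - Ai / (2 * w)) / H))) := by
      refine Finset.sum_congr rfl fun p hp => ?_
      have hp0 : ((p : ℝ)) ≠ 0 := Nat.cast_ne_zero.mpr (by
        have := (Finset.mem_Icc.mp hp).1; omega)
      rw [int_cos_form _ _ _ _ hp0 hH0, show xi + w / 2 - (xi - w / 2) = w by ring]
    have e2 : ∑ u ∈ Finset.Icc 1 K,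
        (a u 0 * (∫ z in (xi - w / 2)..(xi + w / 2), Real.cos ((u : ℝ) * π * z / W)) *
            (yi + Ai / (2 * w) - (yi - Ai / (2 * w)))
          + ∑ p ∈ Finset.Icc 1 K,
            a u p * (∫ z in (xi - w / 2)..(xi + w / 2), Real.cos ((u : ℝ) * π * z / W)) *
              (∫ v in (yi - Ai / (2 * w))..(yi + Ai / (2 * w)),
                Real.cos ((p : ℝ) * π * v / H)))
        = ∑ u ∈ Finset.Icc 1 K,
          (a u 0 * (W / ((u : ℝ) * π) *
              (Real.sin ((u : ℝ) * π * (xi + w / 2) / W) -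
                Real.sin ((u : ℝ) * π * (xi - w / 2) / W))) * (Ai / w)
            + ∑ p ∈ Finset.Icc 1 K,
              a u p * (W / ((u : ℝ) * π) *
                (Real.sin ((u : ℝ) * π * (xi + w / 2) / W) -
                  Real.sin ((u : ℝ) * π * (xi - w / 2) / W))) *
                (H / ((p : ℝ) * π) *
                  (Real.sin ((p : ℝ) * π * (yi + Ai / (2 * w)) / H) -
                    Real.sin ((p : ℝ) * π * (yi - Ai / (2 * w)) / H)))) := by
      refine Finset.sum_congr rfl fun u hu => ?_
      have hu0 : ((u : ℝ)) ≠ 0 := Nat.cast_ne_zero.mpr (by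
        have := (Finset.mem_Icc.mp hu).1; omega)
      rw [int_cos_form _ _ _ _ hu0 hW0,
        show yi + Ai / (2 * w) - (yi - Ai / (2 * w)) = Ai / w by ring]
      congr 1
      refine Finset.sum_congr rfl fun p hp => ?_
      have hp0 : ((p : ℝ)) ≠ 0 := Nat.cast_ne_zero.mpr (by
        have := (Finset.mem_Icc.mp hp).1; omega)
      rw [int_cos_form _ _ _ _ hp0 hH0]
    rw [e1, e2, Finset.sum_add_distrib]
    ring
end
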